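/- For every p ∈ [1,∞) there exists a constant C = C(p) such that for all smooth (2πℤ)^5-periodic functions f, g : ℝ^5 → ℝ and every positive integer σ, the function x ↦ g(x)·f(σx) satisfies ‖g·f(σ·)‖_{L^p(𝕋^5)} ≤ C(‖g‖_{L^p(𝕋^5)}‖f‖_{L^p(𝕋^5)} + σ^{−1/p}‖g‖_{C^1}‖f‖_{L^p(𝕋^5)}), where L^p norms are taken over the fundamental domain [0,2π]^5 and ‖g‖_{C^1} = ‖g‖_{L^∞} + ‖∇g‖_{L^∞}. -/

import Mathlib

open Real MeasureTheory Set

noncomputable section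

/-- `(2πℤ)^5`-periodicity. -/
def Periodic5 {E : Type*} (f : (Fin 5 → ℝ) → E) : Prop :=
  ∀ (x : Fin 5 → ℝ) (k : Fin 5 → ℤ), f (fun i => x i + 2 * Real.pi * (k i : ℝ)) = f x

/-- The fundamental domain `[0,2π]^5`. -/
def cube5 : Set (Fin 5 → ℝ) := Set.Icc (0 : Fin 5 → ℝ) (fun _ => 2 * Real.pi)

/-- `L^p` norm over the fundamental domain. -/
def lpNorm (p : ℝ) (f : (Fin 5 → ℝ) → ℝ) : ℝ :=
  (∫ x in cube5, |f x| ^ p) ^ (1 / p)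

/-- Sup norm of a (periodic) field over the fundamental domain. -/
def supNorm {E : Type*} [NormedAddCommGroup E] (f : (Fin 5 → ℝ) → E) : ℝ :=
  ⨆ x : cube5, ‖f (x : Fin 5 → ℝ)‖

/-- `C^1` norm: sup norm of the function plus sup norm of its gradient. -/
def c1Norm (f : (Fin 5 → ℝ) → ℝ) : ℝ :=
  supNorm f + supNorm (fun x => fderiv ℝ f x)

end

section Helpers

open Real MeasureTheory Set

lemma isCompact_cube5 : IsCompact cube5 := isCompact_Icc

lemma cube5_nonempty : cube5.Nonempty :=
  Set.nonempty_Icc.2 (fun _ => by positivity)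

lemma supNorm_nonneg {E : Type*} [NormedAddCommGroup E] (f : (Fin 5 → ℝ) → E) :
    0 ≤ supNorm f := by
  have := cube5_nonempty
  haveI : Nonempty cube5 := this.to_subtype
  exact Real.iSup_nonneg (fun x => norm_nonneg _)

lemma le_supNorm {E : Type*} [NormedAddCommGroup E] {f : (Fin 5 → ℝ) → E}
    (hf : Continuous f) {x : Fin 5 → ℝ} (hx : x ∈ cube5) : ‖f x‖ ≤ supNorm f := by
  haveI : Nonempty cube5 := cube5_nonempty.to_subtype
  have hbdd : BddAbove (Set.range fun y : cube5 => ‖f (y : Fin 5 → ℝ)‖) := by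
    have h1 : (Set.range fun y : cube5 => ‖f (y : Fin 5 → ℝ)‖) =
        (fun z => ‖f z‖) '' cube5 := by
      ext r
      simp [Set.mem_image, Subtype.exists]
    rw [h1]
    exact (isCompact_cube5.image (hf.norm)).bddAbove
  exact le_ciSup hbdd (⟨x, hx⟩ : cube5)

lemma rpow_add_le_add_rpow' {a b r : ℝ} (ha : 0 ≤ a) (hb : 0 ≤ b) (h0 : 0 ≤ r) (h1 : r ≤ 1) :
    (a + b) ^ r ≤ a ^ r + b ^ r := by
  lift a to NNReal using ha
  lift b to NNReal using hb
  have := NNReal.rpow_add_le_add_rpow a b h0 h1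
  exact_mod_cast this

end Helpers

section Cubes

open Real MeasureTheory Set

noncomputable def ihd (σ : ℕ) : ℝ := 2 * Real.pi / σ

noncomputable def ihA (σ : ℕ) (k : Fin 5 → Fin σ) : Fin 5 → ℝ :=
  fun i => ihd σ * ((k i : ℕ) : ℝ)

noncomputable def ihQ (σ : ℕ) (k : Fin 5 → Fin σ) : Set (Fin 5 → ℝ) :=
  Set.Icc (ihA σ k) (fun i => ihA σ k i + ihd σ)

variable {σ : ℕ}

lemma ihd_pos (hσ : 0 < σ) : 0 < ihd σ := by
  have : (0:ℝ) < σ := by exact_mod_cast hσ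
  unfold ihd; positivity

lemma mem_ihQ {k : Fin 5 → Fin σ} {x : Fin 5 → ℝ} :
    x ∈ ihQ σ k ↔ ∀ i, ihA σ k i ≤ x i ∧ x i ≤ ihA σ k i + ihd σ := by
  simp only [ihQ, Set.mem_Icc, Pi.le_def, forall_and]

lemma ihA_mem_ihQ (hσ : 0 < σ) (k : Fin 5 → Fin σ) : ihA σ k ∈ ihQ σ k := by
  rw [mem_ihQ]
  exact fun i => ⟨le_refl _, le_add_of_nonneg_right (ihd_pos hσ).le⟩

lemma ihQ_subset (hσ : 0 < σ) (k : Fin 5 → Fin σ) : ihQ σ k ⊆ cube5 := by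
  intro x hx
  rw [mem_ihQ] at hx
  have hd := ihd_pos hσ
  constructor <;> intro i
  · have := (hx i).1
    have h0 : (0:ℝ) ≤ ihA σ k i := by
      unfold ihA; positivity
    simpa using h0.trans this
  · have h2 := (hx i).2
    have hki : ((k i : ℕ) : ℝ) + 1 ≤ σ := by
      have := (k i).isLt
      exact_mod_cast Nat.succ_le_of_lt this
    have : ihA σ k i + ihd σ ≤ 2 * Real.pi := by
      unfold ihA ihd
      have hσR : (0:ℝ) < σ := by exact_mod_cast hσ
      rw [div_mul_eq_mul_div, ← add_div, div_le_iff₀ hσR]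
      nlinarith [Real.pi_pos, hki, hσR]
    exact (h2.trans this : x i ≤ (fun _ => 2 * Real.pi) i)

lemma exists_subinterval (hσ : 0 < σ) {t : ℝ} (h0 : 0 ≤ t) (h1 : t ≤ 2 * Real.pi) :
    ∃ j : Fin σ, ihd σ * (j : ℕ) ≤ t ∧ t ≤ ihd σ * (j : ℕ) + ihd σ := by
  have hd := ihd_pos hσ
  set d := ihd σ with hdval
  have hdσ : d * σ = 2 * Real.pi := by
    have hσR : (0:ℝ) < σ := by exact_mod_cast hσ
    rw [hdval, ihd]; field_simp
  set j0 : ℕ := min ⌊t / d⌋₊ (σ - 1) with hj0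
  have hj0lt : j0 < σ := by
    have : σ - 1 < σ := Nat.sub_lt hσ one_pos
    exact lt_of_le_of_lt (min_le_right _ _) this
  refine ⟨⟨j0, hj0lt⟩, ?_, ?_⟩
  · have h1' : (j0 : ℝ) ≤ ⌊t / d⌋₊ := by exact_mod_cast min_le_left _ _
    have h2' : (⌊t / d⌋₊ : ℝ) ≤ t / d := Nat.floor_le (by positivity)
    calc d * (j0 : ℝ) ≤ d * (t / d) := by
          apply mul_le_mul_of_nonneg_left (h1'.trans h2') hd.le
      _ = t := by field_simp
  · rcases le_or_gt (⌊t / d⌋₊) (σ - 1) with hc | hc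
    · have hj0eq : j0 = ⌊t / d⌋₊ := min_eq_left hc
      have := Nat.lt_floor_add_one (t / d)
      have h3 : t / d < (j0 : ℝ) + 1 := by rw [hj0eq]; exact_mod_cast this
      have := (div_lt_iff₀ hd).mp h3
      nlinarith
    · have hj0eq : j0 = σ - 1 := min_eq_right hc.le
      have hcast : ((j0 : ℝ) + 1) = (σ : ℝ) := by
        rw [hj0eq]
        have : (σ - 1 : ℕ) + 1 = σ := Nat.succ_pred_eq_of_pos hσ
        exact_mod_cast congrArg (Nat.cast (R := ℝ)) this
      have : d * ((j0:ℝ) + 1) = 2 * Real.pi := by rw [hcast, hdσ]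
      nlinarith

lemma cube5_eq_iUnion (hσ : 0 < σ) : cube5 = ⋃ k : Fin 5 → Fin σ, ihQ σ k := by
  apply Set.Subset.antisymm
  · intro x hx
    have hxi : ∀ i, ∃ j : Fin σ, ihd σ * (j : ℕ) ≤ x i ∧ x i ≤ ihd σ * (j : ℕ) + ihd σ := by
      intro i
      exact exists_subinterval hσ (by simpa using hx.1 i) (hx.2 i)
    choose k hk using hxi
    exact Set.mem_iUnion.2 ⟨k, mem_ihQ.2 (fun i => hk i)⟩
  · exact Set.iUnion_subset (fun k => ihQ_subset hσ k)

lemma volume_ihQ_inter (hσ : 0 < σ) {k l : Fin 5 → Fin σ} (hkl : k ≠ l) :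
    volume (ihQ σ k ∩ ihQ σ l) = 0 := by
  have key : ∀ (k l : Fin 5 → Fin σ) (i : Fin 5), (k i : ℕ) < (l i : ℕ) →
      volume (ihQ σ k ∩ ihQ σ l) = 0 := by
    intro k l i hi
    have hsub : ihQ σ k ∩ ihQ σ l ⊆ {x : Fin 5 → ℝ | x i = ihA σ k i + ihd σ} := by
      rintro x ⟨hxk, hxl⟩
      rw [mem_ihQ] at hxk hxl
      have h1 : x i ≤ ihA σ k i + ihd σ := (hxk i).2
      have h2 : ihA σ l i ≤ x i := (hxl i).1
      have h3 : ihA σ k i + ihd σ ≤ ihA σ l i := by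
        unfold ihA
        have hd := ihd_pos hσ
        have : ((k i : ℕ) : ℝ) + 1 ≤ ((l i : ℕ) : ℝ) := by exact_mod_cast hi
        nlinarith
      exact le_antisymm h1 (h3.trans h2)
    apply measure_mono_null hsub
    rw [MeasureTheory.volume_pi]
    exact MeasureTheory.Measure.pi_hyperplane (μ := fun _ => (volume : Measure ℝ)) i _
  have : ∃ i, k i ≠ l i := by
    by_contra h
    push_neg at h
    exact hkl (funext h)
  obtain ⟨i, hi⟩ := this
  rcases lt_or_gt_of_ne (fun h : (k i : ℕ) = (l i : ℕ) => hi (Fin.ext h)) with h | h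
  · exact key k l i h
  · rw [Set.inter_comm]; exact key l k i h

end Cubes

section Integrals

open Real MeasureTheory Set

variable {σ : ℕ}

lemma measurableSet_ihQ (k : Fin 5 → Fin σ) : MeasurableSet (ihQ σ k) := measurableSet_Icc

lemma isCompact_ihQ (k : Fin 5 → Fin σ) : IsCompact (ihQ σ k) := isCompact_Icc

lemma integral_cube5_eq_sum (hσ : 0 < σ) {F : (Fin 5 → ℝ) → ℝ} (hF : Continuous F) :
    ∫ x in cube5, F x = ∑ k : Fin 5 → Fin σ, ∫ x in ihQ σ k, F x := by
  rw [cube5_eq_iUnion hσ]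
  rw [MeasureTheory.integral_iUnion_ae (fun k => (measurableSet_ihQ k).nullMeasurableSet)
      (fun k l hkl => volume_ihQ_inter hσ hkl)
      (by
        rw [← cube5_eq_iUnion hσ]
        exact hF.continuousOn.integrableOn_compact isCompact_cube5)]
  exact tsum_fintype _

lemma integral_shifted_cube (h : (Fin 5 → ℝ) → ℝ) (hper : Periodic5 h) (v : Fin 5 → ℕ) :
    ∫ y in Set.Icc (fun i => 2 * Real.pi * (v i : ℝ))
        (fun i => 2 * Real.pi * (v i : ℝ) + 2 * Real.pi), h y = ∫ y in cube5, h y := by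
  set w : Fin 5 → ℝ := fun i => 2 * Real.pi * (v i : ℝ) with hw
  rw [← MeasureTheory.integral_indicator measurableSet_Icc,
      ← MeasureTheory.integral_add_left_eq_self _ w]
  rw [← MeasureTheory.integral_indicator (s := cube5) measurableSet_Icc]
  congr 1
  funext x
  have hmem : (w + x ∈ Set.Icc w (fun i => w i + 2 * Real.pi)) ↔ x ∈ cube5 := by
    simp only [Set.mem_Icc, Pi.le_def, Pi.add_apply, cube5]
    constructor
    · rintro ⟨h1, h2⟩
      exact ⟨fun i => by have := h1 i; simpa using this,
             fun i => by have := h2 i; simpa using this⟩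
    · rintro ⟨h1, h2⟩
      exact ⟨fun i => by have := h1 i; simp at this ⊢; linarith,
             fun i => by have := h2 i; simp at this ⊢; linarith⟩
  by_cases hx : x ∈ cube5
  · rw [Set.indicator_of_mem (hmem.2 hx), Set.indicator_of_mem hx]
    have : (w + x) = fun i => x i + 2 * Real.pi * ((v i : ℤ) : ℝ) := by
      funext i; simp [hw]; push_cast; ring
    rw [this, hper x (fun i => (v i : ℤ))]
  · rw [Set.indicator_of_notMem (fun hc => hx (hmem.1 hc)), Set.indicator_of_notMem hx]

lemma integral_ihQ_scale (hσ : 0 < σ) {h : (Fin 5 → ℝ) → ℝ} (hh : Continuous h)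
    (hper : Periodic5 h) (k : Fin 5 → Fin σ) :
    ∫ x in ihQ σ k, h (fun i => (σ : ℝ) * x i) = ((σ:ℝ)^5)⁻¹ * ∫ y in cube5, h y := by
  have hσR : (0:ℝ) < σ := by exact_mod_cast hσ
  set v : Fin 5 → ℕ := fun i => (k i : ℕ) with hv
  set S : Set (Fin 5 → ℝ) := Set.Icc (fun i => 2 * Real.pi * (v i : ℝ))
      (fun i => 2 * Real.pi * (v i : ℝ) + 2 * Real.pi) with hS
  have hiff : ∀ x : Fin 5 → ℝ, x ∈ ihQ σ k ↔ (σ:ℝ) • x ∈ S := by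
    intro x
    rw [mem_ihQ, hS]
    simp only [Set.mem_Icc, Pi.le_def, Pi.smul_apply, smul_eq_mul]
    rw [forall_and]
    constructor
    · rintro ⟨h1, h2⟩
      refine ⟨fun i => ?_, fun i => ?_⟩
      · have := mul_le_mul_of_nonneg_left (h1 i) hσR.le
        unfold ihA ihd at this
        calc 2 * Real.pi * (v i : ℝ) = (σ:ℝ) * (2 * Real.pi / σ * (v i : ℝ)) := by
              field_simp
          _ ≤ (σ:ℝ) * x i := this
      · have := mul_le_mul_of_nonneg_left (h2 i) hσR.le
        unfold ihA ihd at this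
        calc (σ:ℝ) * x i ≤ (σ:ℝ) * (2 * Real.pi / ↑σ * ↑(v i) + 2 * Real.pi / ↑σ) := this
          _ = 2 * Real.pi * (v i : ℝ) + 2 * Real.pi := by field_simp
    · rintro ⟨h1, h2⟩
      refine ⟨fun i => ?_, fun i => ?_⟩
      · have := mul_le_mul_of_nonneg_left (h1 i) (inv_nonneg.2 hσR.le)
        unfold ihA ihd
        calc 2 * Real.pi / ↑σ * ↑(v i) = (σ:ℝ)⁻¹ * (2 * Real.pi * (v i : ℝ)) := by
              field_simp
          _ ≤ (σ:ℝ)⁻¹ * ((σ:ℝ) * x i) := this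
          _ = x i := by field_simp
      · have := mul_le_mul_of_nonneg_left (h2 i) (inv_nonneg.2 hσR.le)
        unfold ihA ihd
        calc x i = (σ:ℝ)⁻¹ * ((σ:ℝ) * x i) := by field_simp
          _ ≤ (σ:ℝ)⁻¹ * (2 * Real.pi * ↑(v i) + 2 * Real.pi) := this
          _ = 2 * Real.pi / ↑σ * ↑(v i) + 2 * Real.pi / ↑σ := by field_simp
  have key : ∫ x in ihQ σ k, h (fun i => (σ : ℝ) * x i)
      = ∫ x, S.indicator h ((σ:ℝ) • x) := by
    rw [← MeasureTheory.integral_indicator (measurableSet_ihQ k)]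
    congr 1
    funext x
    by_cases hx : x ∈ ihQ σ k
    · rw [Set.indicator_of_mem hx, Set.indicator_of_mem ((hiff x).1 hx)]
      congr 1
    · rw [Set.indicator_of_notMem hx,
          Set.indicator_of_notMem (fun hc => hx ((hiff x).2 hc))]
  rw [key, MeasureTheory.Measure.integral_comp_smul volume (S.indicator h) (σ:ℝ)]
  rw [MeasureTheory.integral_indicator measurableSet_Icc]
  rw [integral_shifted_cube h hper v]
  rw [Module.finrank_fin_fun]
  rw [abs_of_nonneg (by positivity), smul_eq_mul]

end Integrals

section Lip

open Real MeasureTheory Set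

variable {σ : ℕ}

lemma volume_ihQ_toReal (hσ : 0 < σ) (k : Fin 5 → Fin σ) :
    (volume (ihQ σ k)).toReal = (ihd σ) ^ (5:ℕ) := by
  have hd := ihd_pos hσ
  have hle : ihA σ k ≤ fun i => ihA σ k i + ihd σ := fun i => le_add_of_nonneg_right hd.le
  rw [ihQ, Real.volume_Icc_pi_toReal hle]
  simp

lemma lip_of_contDiff {g : (Fin 5 → ℝ) → ℝ} (hg : ContDiff ℝ (⊤ : ℕ∞) g)
    {x y : Fin 5 → ℝ} (hx : x ∈ cube5) (hy : y ∈ cube5) :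
    |g x - g y| ≤ supNorm (fun z => fderiv ℝ g z) * ‖x - y‖ := by
  have hC : ∀ z ∈ cube5, ‖fderiv ℝ g z‖ ≤ supNorm (fun z => fderiv ℝ g z) := by
    intro z hz
    exact le_supNorm (hg.continuous_fderiv (by simp)) hz
  have := (convex_Icc (0 : Fin 5 → ℝ) (fun _ => 2 * Real.pi)).norm_image_sub_le_of_norm_fderiv_le
      (fun z _ => (hg.differentiable (by simp)).differentiableAt) hC hy hx
  simpa [Real.norm_eq_abs] using this

lemma rpow_lip {p M : ℝ} (hp : 1 ≤ p) (hM : 0 ≤ M) {u v : ℝ}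
    (hu : u ∈ Set.Icc (0:ℝ) M) (hv : v ∈ Set.Icc (0:ℝ) M) :
    |u ^ p - v ^ p| ≤ p * M ^ (p - 1) * |u - v| := by
  have hderiv : ∀ t ∈ Set.Icc (0:ℝ) M,
      HasDerivWithinAt (fun s : ℝ => s ^ p) (p * t ^ (p - 1)) (Set.Icc (0:ℝ) M) t := by
    intro t _
    exact (Real.hasDerivAt_rpow_const (Or.inr hp)).hasDerivWithinAt
  have hbound : ∀ t ∈ Set.Icc (0:ℝ) M, ‖p * t ^ (p - 1)‖ ≤ p * M ^ (p - 1) := by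
    intro t ht
    rw [Real.norm_eq_abs, abs_mul, abs_of_nonneg (by linarith : (0:ℝ) ≤ p),
        abs_of_nonneg (Real.rpow_nonneg ht.1 _)]
    exact mul_le_mul_of_nonneg_left
      (Real.rpow_le_rpow ht.1 ht.2 (by linarith)) (by linarith)
  have := (convex_Icc (0:ℝ) M).norm_image_sub_le_of_norm_hasDerivWithin_le hderiv hbound hv hu
  simpa [Real.norm_eq_abs] using this

lemma phi_lip {p : ℝ} (hp : 1 ≤ p) {g : (Fin 5 → ℝ) → ℝ} (hg : ContDiff ℝ (⊤ : ℕ∞) g)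
    {x y : Fin 5 → ℝ} (hx : x ∈ cube5) (hy : y ∈ cube5) :
    |g x| ^ p - |g y| ^ p ≤
      p * (supNorm g) ^ (p - 1) * supNorm (fun z => fderiv ℝ g z) * ‖x - y‖ := by
  set M := supNorm g with hMdef
  set L := supNorm (fun z => fderiv ℝ g z) with hLdef
  have hM : 0 ≤ M := supNorm_nonneg _
  have hgx : |g x| ∈ Set.Icc (0:ℝ) M := ⟨abs_nonneg _, by
    simpa [Real.norm_eq_abs] using le_supNorm hg.continuous hx⟩
  have hgy : |g y| ∈ Set.Icc (0:ℝ) M := ⟨abs_nonneg _, by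
    simpa [Real.norm_eq_abs] using le_supNorm hg.continuous hy⟩
  have h1 : |(|g x|) ^ p - (|g y|) ^ p| ≤ p * M ^ (p-1) * |(|g x|) - (|g y|)| :=
    rpow_lip hp hM hgx hgy
  have h2 : |(|g x|) - (|g y|)| ≤ |g x - g y| := abs_abs_sub_abs_le_abs_sub _ _
  have h3 : |g x - g y| ≤ L * ‖x - y‖ := lip_of_contDiff hg hx hy
  have hpM : 0 ≤ p * M ^ (p-1) := by
    have := Real.rpow_nonneg hM (p-1); nlinarith
  calc |g x| ^ p - |g y| ^ p ≤ |(|g x|) ^ p - (|g y|) ^ p| := le_abs_self _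
    _ ≤ p * M ^ (p-1) * |(|g x|) - (|g y|)| := h1
    _ ≤ p * M ^ (p-1) * (L * ‖x - y‖) := by
        apply mul_le_mul_of_nonneg_left (h2.trans h3) hpM
    _ = p * M ^ (p-1) * L * ‖x - y‖ := by ring

lemma dist_le_ihd (hσ : 0 < σ) {k : Fin 5 → Fin σ} {x : Fin 5 → ℝ} (hx : x ∈ ihQ σ k) :
    ‖x - ihA σ k‖ ≤ ihd σ := by
  have hd := ihd_pos hσ
  rw [pi_norm_le_iff_of_nonneg hd.le]
  intro i
  rw [mem_ihQ] at hx
  have := hx i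
  rw [Real.norm_eq_abs, Pi.sub_apply, abs_le]
  constructor <;> [linarith [this.1]; linarith [this.2]]

end Lip

section Core

open Real MeasureTheory Set

lemma continuous_scale (σ : ℕ) : Continuous (fun x : Fin 5 → ℝ => fun i => (σ:ℝ) * x i) :=
  continuous_pi (fun i => continuous_const.mul (continuous_apply i))

lemma core_ineq {p : ℝ} (hp : 1 ≤ p) {f g : (Fin 5 → ℝ) → ℝ}
    (hf : ContDiff ℝ (⊤ : ℕ∞) f) (hfp : Periodic5 f) (hg : ContDiff ℝ (⊤ : ℕ∞) g) (_hgp : Periodic5 g)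
    {σ : ℕ} (hσ : 0 < σ) :
    ∫ x in cube5, |g x| ^ p * |f (fun i => (σ:ℝ) * x i)| ^ p ≤
      ((2 * Real.pi)⁻¹) ^ (5:ℕ) * (∫ x in cube5, |g x| ^ p) * (∫ y in cube5, |f y| ^ p)
      + 2 * (p * supNorm g ^ (p-1) * supNorm (fun z => fderiv ℝ g z)) * (2 * Real.pi)
        * (σ:ℝ)⁻¹ * (∫ y in cube5, |f y| ^ p) := by
  have hσR : (0:ℝ) < σ := by exact_mod_cast hσ
  have hp0 : (0:ℝ) ≤ p := by linarith
  set φ : (Fin 5 → ℝ) → ℝ := fun x => |g x| ^ p with hφdef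
  set hfn : (Fin 5 → ℝ) → ℝ := fun y => |f y| ^ p with hhdef
  have hφc : Continuous φ := (hg.continuous.abs).rpow_const (fun x => Or.inr hp0)
  have hhc : Continuous hfn := (hf.continuous.abs).rpow_const (fun x => Or.inr hp0)
  have hhper : Periodic5 hfn := by
    intro x k
    simp only [hhdef]
    rw [hfp x k]
  have hφnn : ∀ x, 0 ≤ φ x := fun x => Real.rpow_nonneg (abs_nonneg _) _
  have hhnn : ∀ x, 0 ≤ hfn x := fun x => Real.rpow_nonneg (abs_nonneg _) _
  set H : (Fin 5 → ℝ) → ℝ := fun x => hfn (fun i => (σ:ℝ) * x i) with hHdef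
  have hHc : Continuous H := hhc.comp (continuous_scale σ)
  have hHnn : ∀ x, 0 ≤ H x := fun x => hhnn _
  set J : ℝ := ∫ y in cube5, hfn y with hJdef
  have hJnn : 0 ≤ J :=
    setIntegral_nonneg measurableSet_Icc (fun y _ => hhnn y)
  set G : ℝ := ∫ x in cube5, φ x with hGdef
  set M : ℝ := supNorm g with hMdef
  set L : ℝ := supNorm (fun z => fderiv ℝ g z) with hLdef
  set K : ℝ := p * M ^ (p-1) * L with hKdef
  have hKnn : 0 ≤ K := by
    have h1 : 0 ≤ M ^ (p-1) := Real.rpow_nonneg (supNorm_nonneg _) _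
    have h2 : 0 ≤ L := supNorm_nonneg _
    have : 0 < p := by linarith
    positivity
  set d : ℝ := ihd σ with hddef
  have hd : 0 < d := ihd_pos hσ
  -- Step A: decompose
  have stepA : ∫ x in cube5, φ x * H x = ∑ k : Fin 5 → Fin σ, ∫ x in ihQ σ k, φ x * H x :=
    integral_cube5_eq_sum hσ (hφc.mul hHc)
  -- scaling of H over each subcube
  have hHint : ∀ k : Fin 5 → Fin σ, ∫ x in ihQ σ k, H x = ((σ:ℝ)^5)⁻¹ * J :=
    fun k => integral_ihQ_scale hσ hhc hhper k
  -- Step B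
  have stepB : ∀ k : Fin 5 → Fin σ, ∫ x in ihQ σ k, φ x * H x ≤
      (φ (ihA σ k) + K * d) * (((σ:ℝ)^5)⁻¹ * J) := by
    intro k
    have hsub := ihQ_subset hσ k
    have hak : ihA σ k ∈ cube5 := hsub (ihA_mem_ihQ hσ k)
    have hmono : ∫ x in ihQ σ k, φ x * H x ≤ ∫ x in ihQ σ k, (φ (ihA σ k) + K * d) * H x := by
      apply setIntegral_mono_on
      · exact ((hφc.mul hHc).continuousOn).integrableOn_compact (isCompact_ihQ k)
      · exact ((continuous_const.mul hHc).continuousOn).integrableOn_compact (isCompact_ihQ k)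
      · exact measurableSet_ihQ k
      · intro x hx
        have hφle : φ x ≤ φ (ihA σ k) + K * d := by
          have h1 := phi_lip hp hg (hsub hx) hak
          have h2 := dist_le_ihd hσ hx
          have h3 : K * ‖x - ihA σ k‖ ≤ K * d := mul_le_mul_of_nonneg_left h2 hKnn
          simp only [hφdef, hKdef] at h1 ⊢
          nlinarith
        exact mul_le_mul_of_nonneg_right hφle (hHnn x)
    rw [MeasureTheory.integral_const_mul, hHint k] at hmono
    exact hmono
  -- Step C
  have stepC : ∀ k : Fin 5 → Fin σ, φ (ihA σ k) ≤ (d^(5:ℕ))⁻¹ * (∫ x in ihQ σ k, φ x) + K * d := by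
    intro k
    have hsub := ihQ_subset hσ k
    have hak : ihA σ k ∈ cube5 := hsub (ihA_mem_ihQ hσ k)
    have hmono : ∫ _x in ihQ σ k, (φ (ihA σ k) - K * d) ≤ ∫ x in ihQ σ k, φ x := by
      apply setIntegral_mono_on
      · exact (continuousOn_const).integrableOn_compact (isCompact_ihQ k)
      · exact (hφc.continuousOn).integrableOn_compact (isCompact_ihQ k)
      · exact measurableSet_ihQ k
      · intro x hx
        have h1 := phi_lip hp hg hak (hsub hx)
        have h2 := dist_le_ihd hσ hx
        rw [← norm_sub_rev] at h2
        have h3 : K * ‖ihA σ k - x‖ ≤ K * d := mul_le_mul_of_nonneg_left h2 hKnn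
        simp only [hφdef, hKdef] at h1 ⊢
        nlinarith
    rw [setIntegral_const, measureReal_def, volume_ihQ_toReal hσ k, smul_eq_mul] at hmono
    have hd5 : (0:ℝ) < d^(5:ℕ) := by positivity
    rw [← hddef] at hmono
    have h6 := mul_le_mul_of_nonneg_left hmono (inv_nonneg.2 hd5.le)
    rw [← mul_assoc, inv_mul_cancel₀ hd5.ne', one_mul] at h6
    linarith
  -- Step D: summation
  have hcard : (Finset.univ : Finset (Fin 5 → Fin σ)).card = σ^5 := by simp
  have stepD : ∑ k : Fin 5 → Fin σ, (φ (ihA σ k) + K * d) * (((σ:ℝ)^5)⁻¹ * J) ≤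
      ((2 * Real.pi)⁻¹) ^ (5:ℕ) * G * J + 2 * K * (2 * Real.pi) * (σ:ℝ)⁻¹ * J := by
    have hc : (0:ℝ) ≤ ((σ:ℝ)^5)⁻¹ * J := by positivity
    have h1 : ∑ k : Fin 5 → Fin σ, (φ (ihA σ k) + K * d) * (((σ:ℝ)^5)⁻¹ * J) ≤
        ∑ k : Fin 5 → Fin σ, ((d^(5:ℕ))⁻¹ * (∫ x in ihQ σ k, φ x) + 2 * K * d) * (((σ:ℝ)^5)⁻¹ * J) := by
      apply Finset.sum_le_sum
      intro k _
      apply mul_le_mul_of_nonneg_right _ hc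
      have := stepC k
      linarith
    have hGsum : ∑ k : Fin 5 → Fin σ, ∫ x in ihQ σ k, φ x = G := (integral_cube5_eq_sum hσ hφc).symm
    have h2 : ∑ k : Fin 5 → Fin σ, ((d^(5:ℕ))⁻¹ * (∫ x in ihQ σ k, φ x) + 2 * K * d) * (((σ:ℝ)^5)⁻¹ * J)
        = (d^(5:ℕ))⁻¹ * (((σ:ℝ)^5)⁻¹ * J) * G + (σ^5 : ℝ) * (2 * K * d * (((σ:ℝ)^5)⁻¹ * J)) := by
      rw [← hGsum]
      rw [Finset.sum_congr rfl (fun k _ => by ring :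
        ∀ k ∈ Finset.univ, ((d^(5:ℕ))⁻¹ * (∫ x in ihQ σ k, φ x) + 2 * K * d) * (((σ:ℝ)^5)⁻¹ * J)
          = ((d^(5:ℕ))⁻¹ * (((σ:ℝ)^5)⁻¹ * J)) * (∫ x in ihQ σ k, φ x) + 2 * K * d * (((σ:ℝ)^5)⁻¹ * J))]
      rw [Finset.sum_add_distrib, ← Finset.mul_sum, Finset.sum_const, hcard, nsmul_eq_mul]
      push_cast
      ring
    have hdσ : d * σ = 2 * Real.pi := by
      rw [hddef, ihd]; field_simp
    have h3 : (d^(5:ℕ))⁻¹ * (((σ:ℝ)^5)⁻¹ * J) * G = ((2 * Real.pi)⁻¹) ^ (5:ℕ) * G * J := by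
      have : (d^(5:ℕ))⁻¹ * ((σ:ℝ)^5)⁻¹ = ((2 * Real.pi)⁻¹) ^ (5:ℕ) := by
        rw [← mul_inv, ← mul_pow, hdσ, inv_pow]
      calc (d^(5:ℕ))⁻¹ * (((σ:ℝ)^5)⁻¹ * J) * G
          = ((d^(5:ℕ))⁻¹ * ((σ:ℝ)^5)⁻¹) * J * G := by ring
        _ = ((2 * Real.pi)⁻¹) ^ (5:ℕ) * G * J := by rw [this]; ring
    have h4 : (σ^5 : ℝ) * (2 * K * d * (((σ:ℝ)^5)⁻¹ * J)) = 2 * K * (2 * Real.pi) * (σ:ℝ)⁻¹ * J := by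
      have hd' : d = 2 * Real.pi * (σ:ℝ)⁻¹ := by
        rw [hddef, ihd]; field_simp
      rw [hd']
      field_simp
    exact h1.trans_eq (h2.trans (by rw [h3, h4]))
  calc ∫ x in cube5, φ x * H x = ∑ k : Fin 5 → Fin σ, ∫ x in ihQ σ k, φ x * H x := stepA
    _ ≤ ∑ k : Fin 5 → Fin σ, (φ (ihA σ k) + K * d) * (((σ:ℝ)^5)⁻¹ * J) :=
        Finset.sum_le_sum (fun k _ => stepB k)
    _ ≤ ((2 * Real.pi)⁻¹) ^ (5:ℕ) * G * J + 2 * K * (2 * Real.pi) * (σ:ℝ)⁻¹ * J := stepD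
    _ = ((2 * Real.pi)⁻¹) ^ (5:ℕ) * (∫ x in cube5, |g x| ^ p) * (∫ y in cube5, |f y| ^ p)
      + 2 * (p * M ^ (p-1) * L) * (2 * Real.pi) * (σ:ℝ)⁻¹ * (∫ y in cube5, |f y| ^ p) := by
        rw [hGdef, hJdef, hKdef]

end Core

section Final

open Real MeasureTheory Set

lemma ml_bound {p M L : ℝ} (hp : 1 ≤ p) (hM : 0 ≤ M) (hL : 0 ≤ L) :
    (M ^ (p-1)) ^ (1/p) * L ^ (1/p) ≤ M + L := by
  have hppos : (0:ℝ) < p := by linarith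
  set N : ℝ := M + L with hN
  have hNnn : 0 ≤ N := by positivity
  rcases eq_or_lt_of_le hNnn with hN0 | hNpos
  · have hM0 : M = 0 := by simp only [hN] at hN0; linarith
    have hL0 : L = 0 := by simp only [hN] at hN0; linarith
    rw [hL0, Real.zero_rpow (by positivity : (0:ℝ) < 1/p).ne', mul_zero]
    exact hN0.le
  · have h1 : (M ^ (p-1)) ^ (1/p) = M ^ ((p-1) * (1/p)) := (Real.rpow_mul hM _ _).symm
    have h2 : M ^ ((p-1) * (1/p)) ≤ N ^ ((p-1) * (1/p)) := by
      apply Real.rpow_le_rpow hM (by simp [hN]; linarith) _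
      have : 0 ≤ p - 1 := by linarith
      positivity
    have h3 : L ^ (1/p) ≤ N ^ (1/p) := by
      apply Real.rpow_le_rpow hL (by simp [hN]; linarith) (by positivity)
    have h4 : N ^ ((p-1) * (1/p)) * N ^ (1/p) = N := by
      rw [← Real.rpow_add hNpos]
      have : (p-1) * (1/p) + 1/p = 1 := by field_simp; ring
      rw [this, Real.rpow_one]
    calc (M ^ (p-1)) ^ (1/p) * L ^ (1/p) = M ^ ((p-1) * (1/p)) * L ^ (1/p) := by rw [h1]
      _ ≤ N ^ ((p-1) * (1/p)) * N ^ (1/p) := by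
          apply mul_le_mul h2 h3 (Real.rpow_nonneg hL _) (Real.rpow_nonneg hNnn _)
      _ = N := h4


set_option maxHeartbeats 1000000 in
/-- **Improved Hölder inequality (Modena–Székelyhidi, Lemma A.5).**
For every `p ∈ [1,∞)` there is `C = C(p)` such that for all smooth `(2πℤ)^5`-periodic
`f, g : ℝ^5 → ℝ` and every positive integer `σ`,
`‖g · f(σ·)‖_{L^p} ≤ C (‖g‖_{L^p} ‖f‖_{L^p} + σ^{-1/p} ‖g‖_{C^1} ‖f‖_{L^p})`. -/
theorem improved_holder (p : ℝ) (hp : 1 ≤ p) :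
    ∃ C : ℝ, 0 < C ∧
      ∀ f g : (Fin 5 → ℝ) → ℝ,
        ContDiff ℝ (⊤ : ℕ∞) f → Periodic5 f → ContDiff ℝ (⊤ : ℕ∞) g → Periodic5 g →
        ∀ σ : ℕ, 0 < σ →
          lpNorm p (fun x => g x * f (fun i => (σ : ℝ) * x i)) ≤
            C * (lpNorm p g * lpNorm p f +
              (σ : ℝ) ^ (-(1 / p)) * c1Norm g * lpNorm p f) := by
  have hppos : (0:ℝ) < p := by linarith
  have hp0 : (0:ℝ) ≤ p := hppos.le
  have hinvp : (0:ℝ) < 1/p := by positivity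
  have hinvp1 : 1/p ≤ 1 := by
    rw [div_le_one hppos]; exact hp
  set B : ℝ := 2 * p * (2 * Real.pi) with hB
  have hBpos : 0 < B := by positivity
  refine ⟨max 1 B, lt_of_lt_of_le one_pos (le_max_left _ _), ?_⟩
  set C : ℝ := max 1 B with hC
  have hC1 : 1 ≤ C := le_max_left _ _
  have hCB : B ≤ C := le_max_right _ _
  intro f g hf hfp hg hgp σ hσ
  have hσR : (0:ℝ) < σ := by exact_mod_cast hσ
  set M : ℝ := supNorm g with hM
  set L : ℝ := supNorm (fun z => fderiv ℝ g z) with hL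
  have hMnn : 0 ≤ M := supNorm_nonneg _
  have hLnn : 0 ≤ L := supNorm_nonneg _
  set G : ℝ := ∫ x in cube5, |g x| ^ p with hG
  set J : ℝ := ∫ y in cube5, |f y| ^ p with hJ
  have hGnn : 0 ≤ G := setIntegral_nonneg measurableSet_Icc
    (fun x _ => Real.rpow_nonneg (abs_nonneg _) _)
  have hJnn : 0 ≤ J := setIntegral_nonneg measurableSet_Icc
    (fun x _ => Real.rpow_nonneg (abs_nonneg _) _)
  -- the integral of the product
  set I : ℝ := ∫ x in cube5, |g x| ^ p * |f (fun i => (σ:ℝ) * x i)| ^ p with hI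
  have hInn : 0 ≤ I := setIntegral_nonneg measurableSet_Icc
    (fun x _ => mul_nonneg (Real.rpow_nonneg (abs_nonneg _) _) (Real.rpow_nonneg (abs_nonneg _) _))
  have hlp_eq : lpNorm p (fun x => g x * f (fun i => (σ : ℝ) * x i)) = I ^ (1/p) := by
    rw [_root_.lpNorm, hI]
    congr 1
    apply setIntegral_congr_fun measurableSet_Icc
    intro x _
    simp only
    rw [abs_mul, Real.mul_rpow (abs_nonneg _) (abs_nonneg _)]
  set X : ℝ := ((2 * Real.pi)⁻¹) ^ (5:ℕ) * G * J with hX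
  set Y : ℝ := 2 * (p * M ^ (p-1) * L) * (2 * Real.pi) * (σ:ℝ)⁻¹ * J with hY
  have hXnn : 0 ≤ X := by
    have : (0:ℝ) ≤ ((2 * Real.pi)⁻¹) ^ (5:ℕ) := by positivity
    positivity
  have hYnn : 0 ≤ Y := by
    have h1 : (0:ℝ) ≤ M ^ (p-1) := Real.rpow_nonneg hMnn _
    positivity
  have hcore : I ≤ X + Y := core_ineq hp hf hfp hg hgp hσ
  have hIle : I ^ (1/p) ≤ X ^ (1/p) + Y ^ (1/p) := by
    calc I ^ (1/p) ≤ (X + Y) ^ (1/p) := Real.rpow_le_rpow hInn hcore hinvp.le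
      _ ≤ X ^ (1/p) + Y ^ (1/p) := rpow_add_le_add_rpow' hXnn hYnn hinvp.le hinvp1
  -- bound on X^(1/p)
  have hXle : X ^ (1/p) ≤ lpNorm p g * lpNorm p f := by
    have h2pi : (1:ℝ) ≤ 2 * Real.pi := by nlinarith [Real.pi_gt_three]
    have hfac : (0:ℝ) ≤ ((2 * Real.pi)⁻¹) ^ (5:ℕ) := by positivity
    have hfacle : ((2 * Real.pi)⁻¹) ^ (5:ℕ) ≤ 1 := by
      apply pow_le_one₀ (by positivity)
      rw [inv_le_one_iff₀]; right; exact h2pi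
    rw [hX, Real.mul_rpow (mul_nonneg hfac hGnn) hJnn, Real.mul_rpow hfac hGnn]
    have h1 : (((2 * Real.pi)⁻¹) ^ (5:ℕ)) ^ (1/p) ≤ 1 := Real.rpow_le_one hfac hfacle hinvp.le
    have h2 : (0:ℝ) ≤ G ^ (1/p) := Real.rpow_nonneg hGnn _
    have h3 : (0:ℝ) ≤ J ^ (1/p) := Real.rpow_nonneg hJnn _
    have hg1 : lpNorm p g = G ^ (1/p) := rfl
    have hf1 : lpNorm p f = J ^ (1/p) := rfl
    rw [hg1, hf1]
    have hstep := mul_le_mul_of_nonneg_right (mul_le_mul_of_nonneg_right h1 h2) h3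
    simpa using hstep
  -- bound on Y^(1/p)
  have hYle : Y ^ (1/p) ≤ C * ((σ:ℝ) ^ (-(1/p)) * c1Norm g * lpNorm p f) := by
    have hMp : (0:ℝ) ≤ M ^ (p-1) := Real.rpow_nonneg hMnn _
    have hYeq : Y = B * (M ^ (p-1) * L) * ((σ:ℝ)⁻¹ * J) := by
      rw [hY, hB]; ring
    rw [hYeq]
    rw [Real.mul_rpow (by positivity) (by positivity),
        Real.mul_rpow hBpos.le (by positivity),
        Real.mul_rpow hMp hLnn,
        Real.mul_rpow (by positivity) hJnn]
    have hB1 : B ^ (1/p) ≤ C := by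
      rcases le_total B 1 with hb | hb
      · exact (Real.rpow_le_one hBpos.le hb hinvp.le).trans hC1
      · calc B ^ (1/p) ≤ B ^ (1:ℝ) := Real.rpow_le_rpow_of_exponent_le hb hinvp1
          _ = B := Real.rpow_one B
          _ ≤ C := hCB
    have hml : (M ^ (p-1)) ^ (1/p) * L ^ (1/p) ≤ c1Norm g := ml_bound hp hMnn hLnn
    have hσinv : ((σ:ℝ)⁻¹) ^ (1/p) = (σ:ℝ) ^ (-(1/p)) := by
      rw [← Real.rpow_neg_one, ← Real.rpow_mul hσR.le]
      congr 1
      ring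
    have hJrf : J ^ (1/p) = lpNorm p f := rfl
    rw [hσinv, hJrf]
    have hc1nn : 0 ≤ c1Norm g := add_nonneg hMnn hLnn
    have hσp : (0:ℝ) ≤ (σ:ℝ) ^ (-(1/p)) := Real.rpow_nonneg hσR.le _
    have hlfnn : 0 ≤ lpNorm p f := Real.rpow_nonneg hJnn _
    have hmlnn : 0 ≤ (M ^ (p-1)) ^ (1/p) * L ^ (1/p) :=
      mul_nonneg (Real.rpow_nonneg hMp _) (Real.rpow_nonneg hLnn _)
    have hBp : 0 ≤ B ^ (1/p) := Real.rpow_nonneg hBpos.le _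
    calc B ^ (1/p) * ((M ^ (p-1)) ^ (1/p) * L ^ (1/p)) * ((σ:ℝ) ^ (-(1/p)) * lpNorm p f)
        ≤ C * c1Norm g * ((σ:ℝ) ^ (-(1/p)) * lpNorm p f) := by
          apply mul_le_mul_of_nonneg_right _ (mul_nonneg hσp hlfnn)
          exact mul_le_mul hB1 hml hmlnn (le_trans (by norm_num) hC1)
      _ = C * ((σ:ℝ) ^ (-(1/p)) * c1Norm g * lpNorm p f) := by ring
  -- combine
  rw [hlp_eq]
  have hfinal : I ^ (1/p) ≤ lpNorm p g * lpNorm p f + C * ((σ:ℝ) ^ (-(1/p)) * c1Norm g * lpNorm p f) :=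
    hIle.trans (add_le_add hXle hYle)
  have ht1 : 0 ≤ lpNorm p g * lpNorm p f :=
    mul_nonneg (Real.rpow_nonneg hGnn _) (Real.rpow_nonneg hJnn _)
  nlinarith [hfinal, hC1, ht1]
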